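/- For distinct x, y ∈ (0, 1), the logarithmic mean satisfies L(arctan x, arctan y) ≤ arctan((x+y)/2). -/

import Mathlib

noncomputable def logMean (a b : ℝ) : ℝ := (a - b) / (Real.log a - Real.log b)

open Real

/-! The logarithmic mean of two positive numbers is at most their arithmetic mean, and the
arithmetic mean of `arctan x` and `arctan y` is at most `arctan ((x + y) / 2)` because `arctan`
is concave on `[0, ∞)`. -/

lemma logMean_comm (a b : ℝ) : logMean a b = logMean b a := by
  rw [logMean, logMean, ← neg_div_neg_eq, neg_sub, neg_sub]

/-- The first term of `log (1 + t) - log (1 - t) = 2 ∑ t ^ (2k+1) / (2k+1)`, with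
`t = (a - b) / (a + b)`. -/
lemma two_mul_sub_div_add_le_log_sub_log {a b : ℝ} (hb : 0 < b) (hba : b ≤ a) :
    2 * (a - b) / (a + b) ≤ log a - log b := by
  set t := (a - b) / (a + b) with ht
  have ha : 0 < a := hb.trans_le hba
  have hab : 0 < a + b := by linarith
  have ht0 : 0 ≤ t := div_nonneg (by linarith) hab.le
  have ht1 : |t| < 1 := by
    rw [abs_of_nonneg ht0, div_lt_one hab]
    linarith
  have hsum := hasSum_log_sub_log_of_abs_lt_one ht1
  have hlog : log (1 + t) - log (1 - t) = log a - log b := by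
    have h1 : 1 + t = 2 * a / (a + b) := by rw [ht]; field_simp; ring
    have h2 : 1 - t = 2 * b / (a + b) := by rw [ht]; field_simp; ring
    rw [h1, h2, ← log_div (by positivity) (by positivity), ← log_div ha.ne' hb.ne']
    congr 1
    field_simp
  have := le_hasSum hsum 0 fun k _ => mul_nonneg (by positivity) (pow_nonneg ht0 _)
  rw [hlog] at this
  calc 2 * (a - b) / (a + b) = 2 * t := by rw [ht]; ring
    _ ≤ log a - log b := by simpa using this

lemma logMean_le_add_div_two {a b : ℝ} (ha : 0 < a) (hb : 0 < b) :
    logMean a b ≤ (a + b) / 2 := by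
  wlog hba : b ≤ a generalizing a b
  · rw [logMean_comm, add_comm]
    exact this hb ha (le_of_not_ge hba)
  refine div_le_of_le_mul₀ (sub_nonneg.2 (log_le_log hb hba)) (by positivity) ?_
  calc a - b = (a + b) / 2 * (2 * (a - b) / (a + b)) := by field_simp
    _ ≤ (a + b) / 2 * (log a - log b) :=
      mul_le_mul_of_nonneg_left (two_mul_sub_div_add_le_log_sub_log hb hba) (by positivity)

lemma concaveOn_arctan : ConcaveOn ℝ (Set.Ici 0) arctan := by
  refine AntitoneOn.concaveOn_of_deriv (convex_Ici 0) continuous_arctan.continuousOn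
    differentiable_arctan.differentiableOn ?_
  rw [interior_Ici, Real.deriv_arctan]
  intro s (hs : 0 < s) t _ hst
  dsimp only
  gcongr

lemma arctan_add_div_two_le {x y : ℝ} (hx : 0 ≤ x) (hy : 0 ≤ y) :
    (arctan x + arctan y) / 2 ≤ arctan ((x + y) / 2) := by
  have := concaveOn_arctan.2 (Set.mem_Ici.2 hx) (Set.mem_Ici.2 hy)
    (by norm_num : (0 : ℝ) ≤ 1 / 2) (by norm_num : (0 : ℝ) ≤ 1 / 2) (by norm_num)
  simp only [smul_eq_mul, show (1 : ℝ) / 2 * x + 1 / 2 * y = (x + y) / 2 by ring] at this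
  linarith

theorem stmt12_general (x y : ℝ) (hx : x ∈ Set.Ioo (0:ℝ) 1) (hy : y ∈ Set.Ioo (0:ℝ) 1) :
    logMean (Real.arctan x) (Real.arctan y) ≤ Real.arctan ((x + y) / 2) :=
  (logMean_le_add_div_two (arctan_pos.2 hx.1) (arctan_pos.2 hy.1)).trans
    (arctan_add_div_two_le hx.1.le hy.1.le)

theorem stmt12 (x y : ℝ) (hx : x ∈ Set.Ioo (0:ℝ) 1) (hy : y ∈ Set.Ioo (0:ℝ) 1)
    (hxy : x ≠ y) :
    logMean (Real.arctan x) (Real.arctan y) ≤ Real.arctan ((x + y) / 2) :=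
  stmt12_general x y hx hy
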